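/- arXiv:2206.00754 — 4 statements merged into one kernel-verified Lean document; each statement's English description precedes it below -/
import Mathlib

section
/- Let (x_m) and (y_m) be sequences of non-negative integers with x_m < y_m for all m and y_m → ∞, and let (e_m), (g_m) be sequences of non-negative reals with R_m = Σ_{v = x_m+1}^{y_m} e_v · g_{y_m − v} > 0 for all m. Let (Y_n) be a sequence of random variables and y ∈ ℝ a constant. If (Y_n) is deferred Nörlund statistically convergent in probability to the constant y, then (Y_n²) is deferred Nörlund statistically convergent in probability to y². -/
open MeasureTheory Filter

/-- The deferred Nörlund normalizing sum `R_m = ∑_{v=x_m+1}^{y_m} e_v g_{y_m - v}`. -/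
noncomputable def Rm (x y : ℕ → ℕ) (e g : ℕ → ℝ) (m : ℕ) : ℝ :=
  ∑ v ∈ Finset.Ioc (x m) (y m), e v * g (y m - v)

/-- The family of sets `{n : n ≤ R_m and A m n}` has deferred Nörlund density zero. -/
def DNZero (x y : ℕ → ℕ) (e g : ℕ → ℝ) (A : ℕ → ℕ → Prop) : Prop :=
  Tendsto
    (fun m => (Nat.card {n : ℕ | (n : ℝ) ≤ Rm x y e g m ∧ A m n} : ℝ) / Rm x y e g m)
    atTop (nhds 0)

/-- Deferred Nörlund statistical convergence in probability of `(Y n)` to `Z`. -/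
def StDNP {Ω : Type*} [MeasurableSpace Ω] (μ : Measure Ω)
    (x y : ℕ → ℕ) (e g : ℕ → ℝ) (Y : ℕ → Ω → ℝ) (Z : Ω → ℝ) : Prop :=
  ∀ ε > (0 : ℝ), ∀ δ > (0 : ℝ),
    DNZero x y e g
      (fun m n => δ ≤ e (y m - n) * g n * (μ {ω | ε ≤ |Y n ω - Z ω|}).toReal)

/-!
Squaring is continuous at `c`, so for every `ε > 0` there is `t > 0` with
`{ε ≤ |Y n ^ 2 - c ^ 2|} ⊆ {t ≤ |Y n - c|}`. Hence every exceptional probability of `(Y n ^ 2)` is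
dominated by one of `(Y n)`, and the sets counted in the deferred Nörlund density for `(Y n ^ 2)`
are contained in those for `(Y n)`; the same works for any function continuous at `c`.
-/

theorem setOf_natCast_le_and_eq_empty {r : ℝ} (hr : r < 0) (P : ℕ → Prop) :
    {n : ℕ | (n : ℝ) ≤ r ∧ P n} = ∅ :=
  Set.eq_empty_of_forall_notMem fun n hn => (hr.trans_le (Nat.cast_nonneg n)).not_ge hn.1

theorem natCard_setOf_natCast_le_and_div_nonneg (r : ℝ) (P : ℕ → Prop) :
    0 ≤ (Nat.card {n : ℕ | (n : ℝ) ≤ r ∧ P n} : ℝ) / r := by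
  rcases lt_or_ge r 0 with hr | hr
  · simp [setOf_natCast_le_and_eq_empty hr]
  · positivity

theorem natCard_setOf_natCast_le_and_div_mono (r : ℝ) {P Q : ℕ → Prop} (hPQ : ∀ n, P n → Q n) :
    (Nat.card {n : ℕ | (n : ℝ) ≤ r ∧ P n} : ℝ) / r ≤
      (Nat.card {n : ℕ | (n : ℝ) ≤ r ∧ Q n} : ℝ) / r := by
  rcases lt_or_ge r 0 with hr | hr
  · simp [setOf_natCast_le_and_eq_empty hr]
  · have hfin : {n : ℕ | (n : ℝ) ≤ r ∧ Q n}.Finite :=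
      (Set.finite_Iic ⌊r⌋₊).subset fun n hn => Nat.le_floor hn.1
    have hcard := Nat.card_mono hfin fun n (hn : _ ∧ P n) => ⟨hn.1, hPQ n hn.2⟩
    exact div_le_div_of_nonneg_right (by exact_mod_cast hcard) hr

theorem DNZero.mono {x y : ℕ → ℕ} {e g : ℕ → ℝ} {A B : ℕ → ℕ → Prop}
    (hB : DNZero x y e g B) (hAB : ∀ m n, A m n → B m n) : DNZero x y e g A :=
  squeeze_zero (fun _ => natCard_setOf_natCast_le_and_div_nonneg _ _)
    (fun m => natCard_setOf_natCast_le_and_div_mono _ (hAB m)) hB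

theorem le_mul_of_le_mul_of_le {δ a p q : ℝ} (hδ : 0 < δ) (hp : 0 ≤ p) (hpq : p ≤ q)
    (h : δ ≤ a * p) : δ ≤ a * q :=
  h.trans <| mul_le_mul_of_nonneg_left hpq (pos_of_mul_pos_left (hδ.trans_le h) hp).le

theorem StDNP.comp_const {Ω : Type*} [MeasurableSpace Ω] {μ : Measure Ω} [IsFiniteMeasure μ]
    {x y : ℕ → ℕ} {e g : ℕ → ℝ} {Y : ℕ → Ω → ℝ} {c : ℝ} {f : ℝ → ℝ}
    (hf : ContinuousAt f c) (hY : StDNP μ x y e g Y fun _ => c) :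
    StDNP μ x y e g (fun n ω => f (Y n ω)) fun _ => f c := by
  intro ε hε δ hδ
  obtain ⟨t, ht, hft⟩ := Metric.continuousAt_iff.mp hf ε hε
  have hsub (n : ℕ) : {ω | ε ≤ |f (Y n ω) - f c|} ⊆ {ω | t ≤ |Y n ω - c|} :=
    fun ω (hω : ε ≤ _) => le_of_not_gt fun hlt => hω.not_gt (hft hlt)
  exact (hY t ht δ hδ).mono fun m n hn => le_mul_of_le_mul_of_le hδ ENNReal.toReal_nonneg
    (ENNReal.toReal_mono (measure_ne_top μ _) (measure_mono (hsub n))) hn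

theorem stmt_1_general {Ω : Type*} [MeasurableSpace Ω] (μ : Measure Ω) [IsProbabilityMeasure μ]
    (x y : ℕ → ℕ) (e g : ℕ → ℝ)
    (Y : ℕ → Ω → ℝ) (c : ℝ)
    (hY : StDNP μ x y e g Y (fun _ => c)) :
    StDNP μ x y e g (fun n ω => (Y n ω) ^ 2) (fun _ => c ^ 2) :=
  hY.comp_const (f := fun a => a ^ 2) (continuous_pow 2).continuousAt

/-- If `(Y n)` is St_DNP-convergent to the constant `c`, then
`(Y n ^ 2)` is St_DNP-convergent to `c ^ 2`. -/
theorem stmt_1 {Ω : Type*} [MeasurableSpace Ω] (μ : Measure Ω) [IsProbabilityMeasure μ]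
    (x y : ℕ → ℕ) (e g : ℕ → ℝ)
    (hxy : ∀ m, x m < y m) (hy : Tendsto y atTop atTop)
    (he : ∀ m, 0 ≤ e m) (hg : ∀ m, 0 ≤ g m)
    (hR : ∀ m, 0 < Rm x y e g m)
    (Y : ℕ → Ω → ℝ) (c : ℝ)
    (hYmeas : ∀ n, Measurable (Y n))
    (hY : StDNP μ x y e g Y (fun _ => c)) :
    StDNP μ x y e g (fun n ω => (Y n ω) ^ 2) (fun _ => c ^ 2) :=
  stmt_1_general μ x y e g Y c hY
end

section
/- Let (x_m) and (y_m) be sequences of non-negative integers with x_m < y_m for all m and y_m → ∞, and let (e_m), (g_m) be sequences of non-negative reals with R_m = Σ_{v = x_m+1}^{y_m} e_v · g_{y_m − v} > 0 for all m. Let (Y_n) and (Z_n) be sequences of random variables on the same probability space, with each Z_n almost surely nonzero, and y, z ∈ ℝ constants with z ≠ 0. If (Y_n) is deferred Nörlund statistically convergent in probability to the constant y and (Z_n) is deferred Nörlund statistically convergent in probability to the constant z, then the sequence (Y_n / Z_n) is deferred Nörlund statistically convergent in probability to y/z. -/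
open MeasureTheory Filter

/-! A ratio `Y n ω / Z n ω` can be `ε`-far from `c / d` only where `Y n ω` is `η`-far from `c`
or `Z n ω` is `η`-far from `d`, for some `η > 0` given by continuity of division at `(c, d)`
(this also covers the points where `Z n ω = 0`). Hence the deviation probability of the ratio is
bounded by the sum of those of `Y n` and `Z n`, so every index counted for the ratio at level `δ`
is counted for `Y` or for `Z` at level `δ / 2`, and deferred Nörlund density zero is preserved
under such finite unions. -/

lemma finite_setOf_natCast_le_and (R : ℝ) (P : ℕ → Prop) :
    {n : ℕ | (n : ℝ) ≤ R ∧ P n}.Finite :=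
  (Set.finite_Iic ⌊R⌋₊).subset fun _ hn => Nat.le_floor hn.1

lemma DNZero.of_imp_or {x y : ℕ → ℕ} {e g : ℕ → ℝ} {A B C : ℕ → ℕ → Prop}
    (hB : DNZero x y e g B) (hC : DNZero x y e g C)
    (hABC : ∀ m n, A m n → B m n ∨ C m n) : DNZero x y e g A := by
  set R := Rm x y e g
  have hcard : ∀ m, (Nat.card {n : ℕ | (n : ℝ) ≤ R m ∧ A m n} : ℝ) ≤
      Nat.card {n : ℕ | (n : ℝ) ≤ R m ∧ B m n} + Nat.card {n : ℕ | (n : ℝ) ≤ R m ∧ C m n} := by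
    intro m
    simp only [Nat.card_coe_set_eq]
    have hsub : {n : ℕ | (n : ℝ) ≤ R m ∧ A m n} ⊆
        {n : ℕ | (n : ℝ) ≤ R m ∧ B m n} ∪ {n : ℕ | (n : ℝ) ≤ R m ∧ C m n} := fun n hn =>
      (hABC m n hn.2).imp (fun h => ⟨hn.1, h⟩) (fun h => ⟨hn.1, h⟩)
    exact_mod_cast (Set.ncard_le_ncard hsub
      ((finite_setOf_natCast_le_and _ _).union (finite_setOf_natCast_le_and _ _))).trans
        (Set.ncard_union_le _ _)
  have hsum := hB.abs.add hC.abs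
  rw [abs_zero, add_zero] at hsum
  refine squeeze_zero_norm (fun m => ?_) hsum
  simp only [Real.norm_eq_abs, abs_div, Nat.abs_cast, ← add_div]
  exact div_le_div_of_nonneg_right (hcard m) (abs_nonneg _)

lemma half_le_mul_or_half_le_mul {δ w p p₁ p₂ : ℝ} (hδ : 0 < δ) (hp : 0 ≤ p)
    (hpp : p ≤ p₁ + p₂) (h : δ ≤ w * p) : δ / 2 ≤ w * p₁ ∨ δ / 2 ≤ w * p₂ := by
  have hw : 0 ≤ w := by
    by_contra! hw
    nlinarith
  by_contra! hlt
  nlinarith [mul_le_mul_of_nonneg_left hpp hw]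

lemma StDNP.comp₂ {Ω : Type*} [MeasurableSpace Ω] {μ : Measure Ω} [IsFiniteMeasure μ]
    {x y : ℕ → ℕ} {e g : ℕ → ℝ} {Y Z : ℕ → Ω → ℝ} {c d : ℝ} {f : ℝ → ℝ → ℝ}
    (hf : ContinuousAt (Function.uncurry f) (c, d))
    (hY : StDNP μ x y e g Y fun _ => c) (hZ : StDNP μ x y e g Z fun _ => d) :
    StDNP μ x y e g (fun n ω => f (Y n ω) (Z n ω)) fun _ => f c d := by
  intro ε hε δ hδ
  obtain ⟨η, hη, hfη⟩ := Metric.continuousAt_iff.mp hf ε hε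
  have hfar : ∀ a b, ε ≤ |f a b - f c d| → η ≤ |a - c| ∨ η ≤ |b - d| := by
    intro a b hab
    by_contra! hclose
    have := @hfη (a, b) (by simpa [Prod.dist_eq, Real.dist_eq] using hclose)
    rw [Real.dist_eq] at this
    exact hab.not_gt this
  have hprob : ∀ n, μ.real {ω | ε ≤ |f (Y n ω) (Z n ω) - f c d|} ≤
      μ.real {ω | η ≤ |Y n ω - c|} + μ.real {ω | η ≤ |Z n ω - d|} := fun n =>
    (measureReal_mono fun ω hω => hfar _ _ hω).trans (measureReal_union_le _ _)
  exact DNZero.of_imp_or (hY η hη (δ / 2) (half_pos hδ)) (hZ η hη (δ / 2) (half_pos hδ))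
    fun m n h => half_le_mul_or_half_le_mul hδ measureReal_nonneg (hprob n) h

theorem stmt_3_general {Ω : Type*} [MeasurableSpace Ω] (μ : Measure Ω) [IsProbabilityMeasure μ]
    (x y : ℕ → ℕ) (e g : ℕ → ℝ)
    (Y Z : ℕ → Ω → ℝ) (c d : ℝ) (hd : d ≠ 0)
    (hY : StDNP μ x y e g Y (fun _ => c))
    (hZ : StDNP μ x y e g Z (fun _ => d)) :
    StDNP μ x y e g (fun n ω => Y n ω / Z n ω) (fun _ => c / d) :=
  StDNP.comp₂ (f := (· / ·)) (continuousAt_fst.div continuousAt_snd hd) hY hZ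

/-- If `(Y n)` is St_DNP-convergent to the constant `c`, `(Z n)` is
St_DNP-convergent to the constant `d ≠ 0`, and each `Z n` is a.s. nonzero, then
`(Y n / Z n)` is St_DNP-convergent to `c / d`. -/
theorem stmt_3 {Ω : Type*} [MeasurableSpace Ω] (μ : Measure Ω) [IsProbabilityMeasure μ]
    (x y : ℕ → ℕ) (e g : ℕ → ℝ)
    (hxy : ∀ m, x m < y m) (hy : Tendsto y atTop atTop)
    (he : ∀ m, 0 ≤ e m) (hg : ∀ m, 0 ≤ g m)
    (hR : ∀ m, 0 < Rm x y e g m)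
    (Y Z : ℕ → Ω → ℝ) (c d : ℝ) (hd : d ≠ 0)
    (hYmeas : ∀ n, Measurable (Y n)) (hZmeas : ∀ n, Measurable (Z n))
    (hZne : ∀ n, ∀ᵐ ω ∂μ, Z n ω ≠ 0)
    (hY : StDNP μ x y e g Y (fun _ => c))
    (hZ : StDNP μ x y e g Z (fun _ => d)) :
    StDNP μ x y e g (fun n ω => Y n ω / Z n ω) (fun _ => c / d) :=
  stmt_3_general μ x y e g Y Z c d hd hY hZ
end

section
/- There exist sequences (x_m), (y_m) of non-negative integers with x_m < y_m for all m and y_m → ∞, sequences (e_m), (g_m) of non-negative reals with R_m = Σ_{v = x_m+1}^{y_m} e_v · g_{y_m − v} > 0 for all m, a probability space, and a sequence of random variables (Y_n) on it, such that (Y_n) is deferred Nörlund statistically convergent in probability to 0 but, for every r ≥ 1, (Y_n) is not deferred Nörlund statistically r-th mean convergent to 0. In particular one may take Y_n taking the value n with probability 1/√n and the value 0 with probability 1 − 1/√n (for n ≥ 1). -/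
/-!
Take the Cesàro data `x_m = 0`, `y_m = m + 1`, `e = g = 1`, so that `R_m = m + 1`, and realise
`Y_n` on `[0, 1]` as `n` times the indicator of `[0, 1/√n)`. Then `P(|Y_n| ≥ ε) ≤ 1/√n`, so
`δ ≤ P(|Y_n| ≥ ε)` forces `n ≤ δ⁻²`: the exceptional sets are bounded and have density zero.
On the other hand `E|Y_n|^r = n^r/√n ≥ √n ≥ 1` for every `n ≥ 1`, so for `ε = 1` the exceptional
set contains all `1 ≤ n ≤ R_m` and its density does not tend to zero.
-/

open MeasureTheory Filter

/-- Deferred Nörlund statistical `r`-th mean convergence of `(Y n)` to `Z`. -/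
def StDNM {Ω : Type*} [MeasurableSpace Ω] (μ : Measure Ω)
    (x y : ℕ → ℕ) (e g : ℕ → ℝ) (Y : ℕ → Ω → ℝ) (Z : Ω → ℝ) (r : ℝ) : Prop :=
  ∀ ε > (0 : ℝ),
    DNZero x y e g
      (fun m n => ε ≤ e (y m - n) * g n * ∫ ω, |Y n ω - Z ω| ^ r ∂μ)


section DNZero

variable {x y : ℕ → ℕ} {e g : ℕ → ℝ} {A : ℕ → ℕ → Prop}

lemma dnZero_of_le_bound (hR : Tendsto (Rm x y e g) atTop atTop) (N : ℕ)
    (hA : ∀ m n, A m n → n ≤ N) : DNZero x y e g A := by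
  have hcard : ∀ m, (Nat.card {n : ℕ | (n : ℝ) ≤ Rm x y e g m ∧ A m n} : ℝ) ≤ N + 1 := by
    intro m
    have hsub : {n : ℕ | (n : ℝ) ≤ Rm x y e g m ∧ A m n} ⊆ Set.Iic N := fun n hn => hA m n hn.2
    exact_mod_cast (Nat.card_mono (Set.finite_Iic N) hsub).trans_eq (by simp)
  refine squeeze_zero' ?_ ?_ (tendsto_const_nhds (x := ((N : ℝ) + 1)).div_atTop hR)
  · filter_upwards [hR.eventually_ge_atTop 0] with m hm using div_nonneg (Nat.cast_nonneg _) hm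
  · filter_upwards [hR.eventually_gt_atTop 0] with m hm
    exact div_le_div_of_nonneg_right (hcard m) hm.le

/-- Once `R_m ≥ 2`, the set `{1, …, ⌊R_m⌋}` already has more than `R_m / 2` elements. -/
lemma not_dnZero_of_forall_one_le (hR : Tendsto (Rm x y e g) atTop atTop)
    (hA : ∀ m n, 1 ≤ n → A m n) : ¬ DNZero x y e g A := by
  intro h
  have hhalf : ∀ᶠ m in atTop,
      (1 / 2 : ℝ) ≤ Nat.card {n : ℕ | (n : ℝ) ≤ Rm x y e g m ∧ A m n} / Rm x y e g m := by
    filter_upwards [hR.eventually_ge_atTop 2] with m hm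
    set R := Rm x y e g m
    have hfin : {n : ℕ | (n : ℝ) ≤ R ∧ A m n}.Finite :=
      (Set.finite_Iic ⌊R⌋₊).subset fun n hn => Nat.le_floor hn.1
    have hsub : Set.Icc 1 ⌊R⌋₊ ⊆ {n : ℕ | (n : ℝ) ≤ R ∧ A m n} := fun n hn =>
      ⟨(Nat.cast_le.2 hn.2).trans (Nat.floor_le (by linarith)), hA m n hn.1⟩
    have hcard : (⌊R⌋₊ : ℝ) ≤ Nat.card {n : ℕ | (n : ℝ) ≤ R ∧ A m n} := by
      have := Nat.card_mono hfin hsub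
      exact_mod_cast this.trans_eq' (by simp)
    rw [le_div_iff₀ (by linarith)]
    linarith [Nat.lt_floor_add_one R]
  have hsmall := h.eventually (gt_mem_nhds (by norm_num : (0 : ℝ) < 1 / 2))
  obtain ⟨m, hge, hlt⟩ := (hhalf.and hsmall).exists
  linarith

end DNZero

lemma Rm_cesaro (m : ℕ) :
    Rm (fun _ => 0) (fun m => m + 1) (fun _ => 1) (fun _ => 1) m = m + 1 := by
  simp [Rm]

lemma tendsto_Rm_cesaro :
    Tendsto (Rm (fun _ => 0) (fun m => m + 1) (fun _ => 1) (fun _ => 1)) atTop atTop := by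
  simp only [funext Rm_cesaro]
  exact tendsto_atTop_add_const_right _ 1 tendsto_natCast_atTop_atTop

section Indicator

variable {Ω : Type*} {s : Set Ω} {a : ℝ}

lemma setOf_indicator_const_eq_self (ha : a ≠ 0) :
    {ω | s.indicator (fun _ => a) ω = a} = s := by
  ext ω
  by_cases hω : ω ∈ s <;> simp [hω, ha]

lemma setOf_indicator_const_eq_zero (ha : a ≠ 0) :
    {ω | s.indicator (fun _ => a) ω = 0} = sᶜ := by
  ext ω
  by_cases hω : ω ∈ s <;> simp [hω, ha]

lemma setOf_le_abs_indicator_subset {f : Ω → ℝ} {ε : ℝ} (hε : 0 < ε) :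
    {ω | ε ≤ |s.indicator f ω|} ⊆ s := fun ω hω => by
  by_contra hωs
  have : ε ≤ 0 := by simpa [Set.indicator_of_notMem hωs] using hω
  linarith

lemma integral_abs_indicator_const_rpow [MeasurableSpace Ω] (μ : Measure Ω)
    (hs : MeasurableSet s) {r : ℝ} (hr : r ≠ 0) :
    ∫ ω, |s.indicator (fun _ => a) ω| ^ r ∂μ = μ.real s * |a| ^ r := by
  have : (fun ω => |s.indicator (fun _ => a) ω| ^ r) = s.indicator fun _ => |a| ^ r := by
    ext ω
    by_cases hω : ω ∈ s <;> simp [hω, Real.zero_rpow hr]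
  rw [this, integral_indicator_const _ hs, smul_eq_mul]

end Indicator

lemma volume_restrict_unitInterval_Iio {c : ℝ} (hc : c ≤ 1) :
    volume.restrict (Set.Icc (0 : ℝ) 1) (Set.Iio c) = ENNReal.ofReal c := by
  have : Set.Iio c ∩ Set.Icc 0 1 = Set.Ico 0 c := by
    ext; simp only [Set.mem_inter_iff, Set.mem_Iio, Set.mem_Icc, Set.mem_Ico]; grind
  rw [Measure.restrict_apply measurableSet_Iio, this, Real.volume_Ico, sub_zero]

lemma volume_restrict_unitInterval_Ici {c : ℝ} (hc : 0 ≤ c) :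
    volume.restrict (Set.Icc (0 : ℝ) 1) (Set.Ici c) = ENNReal.ofReal (1 - c) := by
  have : Set.Ici c ∩ Set.Icc 0 1 = Set.Icc c 1 := by
    ext; simp only [Set.mem_inter_iff, Set.mem_Ici, Set.mem_Icc]; grind
  rw [Measure.restrict_apply measurableSet_Ici, this, Real.volume_Icc]

/-- Valid also at `n = 0`, where `1 / √0 = 0`. -/
lemma one_div_sqrt_natCast_le_one (n : ℕ) : 1 / Real.sqrt n ≤ 1 := by
  rcases n.eq_zero_or_pos with rfl | hn
  · simp
  · exact div_le_one_of_le₀ (Real.one_le_sqrt.2 (by exact_mod_cast hn)) (Real.sqrt_nonneg _)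

lemma le_ceil_of_le_one_div_sqrt {n : ℕ} {δ : ℝ} (hδ : 0 < δ) (h : δ ≤ 1 / Real.sqrt n) :
    n ≤ ⌈(δ ^ 2)⁻¹⌉₊ := by
  rcases n.eq_zero_or_pos with rfl | hn
  · simp at h; linarith
  have hsqrt : 0 < Real.sqrt n := Real.sqrt_pos.2 (by exact_mod_cast hn)
  have hle : Real.sqrt n ≤ δ⁻¹ := by
    rw [le_inv_comm₀ hsqrt hδ]
    simpa only [one_div] using h
  have : (n : ℝ) ≤ (δ ^ 2)⁻¹ := by
    rw [← Real.sq_sqrt (Nat.cast_nonneg n), ← inv_pow]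
    exact pow_le_pow_left₀ hsqrt.le hle 2
  exact_mod_cast this.trans (Nat.le_ceil _)

lemma one_le_div_sqrt_mul_rpow {t r : ℝ} (ht : 1 ≤ t) (hr : 1 ≤ r) :
    1 ≤ 1 / Real.sqrt t * t ^ r := by
  have hsqrt : 0 < Real.sqrt t := Real.sqrt_pos.2 (by linarith)
  rw [div_mul_eq_mul_div, one_mul, le_div_iff₀ hsqrt, one_mul]
  calc Real.sqrt t ≤ t := Real.sqrt_le_iff.2 ⟨by linarith, by nlinarith⟩
    _ ≤ t ^ r := by simpa using Real.rpow_le_rpow_of_exponent_le ht hr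

/-- As a random variable on `[0, 1]` with Lebesgue measure, `spike n` equals `n` with probability
`1 / √n` and `0` otherwise. -/
noncomputable def spike (n : ℕ) : ℝ → ℝ :=
  (Set.Iio (1 / Real.sqrt n)).indicator fun _ => (n : ℝ)

lemma toReal_measure_le_abs_spike_le {ε : ℝ} (hε : 0 < ε) (n : ℕ) :
    (volume.restrict (Set.Icc (0 : ℝ) 1) {ω | ε ≤ |spike n ω|}).toReal ≤ 1 / Real.sqrt n := by
  have h := measure_mono (μ := volume.restrict (Set.Icc (0 : ℝ) 1))
    (setOf_le_abs_indicator_subset (s := Set.Iio (1 / Real.sqrt n)) (f := fun _ => (n : ℝ)) hε)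
  rw [volume_restrict_unitInterval_Iio (one_div_sqrt_natCast_le_one n)] at h
  exact ENNReal.toReal_le_of_le_ofReal (by positivity) h

lemma one_le_integral_abs_spike_rpow {n : ℕ} (hn : 1 ≤ n) {r : ℝ} (hr : 1 ≤ r) :
    1 ≤ ∫ ω, |spike n ω| ^ r ∂volume.restrict (Set.Icc (0 : ℝ) 1) := by
  rw [spike, integral_abs_indicator_const_rpow _ measurableSet_Iio (by linarith), measureReal_def,
    volume_restrict_unitInterval_Iio (one_div_sqrt_natCast_le_one n),
    ENNReal.toReal_ofReal (by positivity), abs_of_nonneg (Nat.cast_nonneg n)]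
  exact one_le_div_sqrt_mul_rpow (by exact_mod_cast hn) hr

/-- There are deferred Nörlund data and a sequence of random variables,
with `Y n` taking the value `n` with probability `1/√n` and the value `0` with probability
`1 − 1/√n` (for `n ≥ 1`), which is St_DNP-convergent to `0` but, for every `r ≥ 1`, is not
St_DNM-convergent to `0`. -/
theorem stmt_9 :
    ∃ (x y : ℕ → ℕ) (e g : ℕ → ℝ),
      (∀ m, x m < y m) ∧ Tendsto y atTop atTop ∧
      (∀ m, 0 ≤ e m) ∧ (∀ m, 0 ≤ g m) ∧
      (∀ m, 0 < Rm x y e g m) ∧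
      ∃ (Ω : Type) (_ : MeasurableSpace Ω) (μ : Measure Ω) (Y : ℕ → Ω → ℝ),
        IsProbabilityMeasure μ ∧ (∀ n, Measurable (Y n)) ∧
        (∀ n, 1 ≤ n →
          (∀ ω, Y n ω = n ∨ Y n ω = 0) ∧
          μ {ω | Y n ω = n} = ENNReal.ofReal (1 / Real.sqrt n) ∧
          μ {ω | Y n ω = 0} = ENNReal.ofReal (1 - 1 / Real.sqrt n)) ∧
        StDNP μ x y e g Y (fun _ => 0) ∧
        (∀ r : ℝ, 1 ≤ r → ¬ StDNM μ x y e g Y (fun _ => 0) r) := by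
  refine ⟨fun _ => 0, fun m => m + 1, fun _ => 1, fun _ => 1, fun m => m.succ_pos,
    tendsto_add_atTop_nat 1, fun _ => zero_le_one, fun _ => zero_le_one,
    fun m => by rw [Rm_cesaro]; positivity, ℝ, inferInstance,
    volume.restrict (Set.Icc 0 1), spike, ⟨by simp⟩,
    fun _ => measurable_const.indicator measurableSet_Iio, fun n hn => ?_, ?_, ?_⟩
  · have hn0 : (n : ℝ) ≠ 0 := by positivity
    refine ⟨fun ω => Set.indicator_eq_zero_or_self _ _ ω |>.symm, ?_, ?_⟩
    · rw [spike, setOf_indicator_const_eq_self hn0,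
        volume_restrict_unitInterval_Iio (one_div_sqrt_natCast_le_one n)]
    · rw [spike, setOf_indicator_const_eq_zero hn0, Set.compl_Iio,
        volume_restrict_unitInterval_Ici (by positivity)]
  · intro ε hε δ hδ
    refine dnZero_of_le_bound tendsto_Rm_cesaro ⌈(δ ^ 2)⁻¹⌉₊ fun m n hn => ?_
    simp only [one_mul, sub_zero] at hn
    exact le_ceil_of_le_one_div_sqrt hδ (hn.trans (toReal_measure_le_abs_spike_le hε n))
  · intro r hr h
    refine not_dnZero_of_forall_one_le tendsto_Rm_cesaro (fun m n hn => ?_) (h 1 one_pos)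
    simpa only [one_mul, sub_zero] using one_le_integral_abs_spike_rpow hn hr
end

section
/- There exist sequences (x_m), (y_m) of non-negative integers with x_m < y_m for all m and y_m → ∞, sequences (e_m), (g_m) of non-negative reals with R_m = Σ_{v = x_m+1}^{y_m} e_v · g_{y_m − v} > 0 for all m, a probability space, a sequence of random variables (Y_n) on it, and a random variable Y on the same space, such that (Y_n) is deferred Nörlund statistically distribution convergent to Y but (Y_n) is not deferred Nörlund statistically convergent in probability to Y. In particular one may take each Y_n and Y to be {0,1}-valued with P(Y_n = 1, Y = 0) = P(Y_n = 0, Y = 1) = 1/2 and P(Y_n = 0, Y = 0) = P(Y_n = 1, Y = 1) = 0. -/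
open MeasureTheory Filter

/-- Deferred Nörlund statistical distribution convergence of `(Y n)` to `Z`. -/
def StDNDC {Ω : Type*} [MeasurableSpace Ω] (μ : Measure Ω)
    (x y : ℕ → ℕ) (e g : ℕ → ℝ) (Y : ℕ → Ω → ℝ) (Z : Ω → ℝ) : Prop :=
  ∀ t : ℝ, ContinuousAt (fun s => (μ {ω | Z ω ≤ s}).toReal) t →
    ∀ ε > (0 : ℝ),
      DNZero x y e g
        (fun m n =>
          ε ≤ e (y m - n) * g n *
            |(μ {ω | Y n ω ≤ t}).toReal - (μ {ω | Z ω ≤ t}).toReal|)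

open ProbabilityTheory

namespace DNZero

variable {x y : ℕ → ℕ} {e g : ℕ → ℝ} {A : ℕ → ℕ → Prop}

theorem of_forall_not (h : ∀ m n, ¬ A m n) : DNZero x y e g A := by
  have hempty : ∀ m, {n : ℕ | (n : ℝ) ≤ Rm x y e g m ∧ A m n} = ∅ := fun m =>
    Set.eq_empty_of_forall_notMem fun n hn => h m n hn.2
  simp [DNZero, hempty]

/-- Once `R_m > 0`, the set `{n : n ≤ R_m}` has `⌊R_m⌋ + 1 > R_m` elements, so its density
exceeds `1`. -/
theorem not_of_forall (hR : ∀ᶠ m in atTop, 0 < Rm x y e g m) (h : ∀ m n, A m n) :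
    ¬ DNZero x y e g A := by
  intro hzero
  have hone : ∀ᶠ m in atTop,
      1 ≤ (Nat.card {n : ℕ | (n : ℝ) ≤ Rm x y e g m ∧ A m n} : ℝ) / Rm x y e g m := by
    filter_upwards [hR] with m hm
    have hset : {n : ℕ | (n : ℝ) ≤ Rm x y e g m ∧ A m n} = Set.Iic ⌊Rm x y e g m⌋₊ := by
      ext n
      simp [h m n, Nat.le_floor_iff hm.le]
    rw [hset, Nat.card_eq_card_toFinset, Set.toFinset_Iic, Nat.card_Iic, one_le_div hm]
    exact_mod_cast (Nat.lt_floor_add_one _).le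
  have := ge_of_tendsto hzero hone
  norm_num at this

end DNZero

theorem stDNDC_of_forall_measure_le_eq {Ω : Type*} [MeasurableSpace Ω] {μ : Measure Ω}
    {x y : ℕ → ℕ} {e g : ℕ → ℝ} {Y : ℕ → Ω → ℝ} {Z : Ω → ℝ}
    (h : ∀ n t, μ {ω | Y n ω ≤ t} = μ {ω | Z ω ≤ t}) : StDNDC μ x y e g Y Z :=
  fun t _ ε hε => DNZero.of_forall_not fun m n => by simpa [h n t] using hε

theorem uniformOn_univ_preimage_of_bijective {Ω : Type*} [Fintype Ω] [MeasurableSpace Ω]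
    [MeasurableSingletonClass Ω] {f : Ω → Ω} (hf : f.Bijective) (s : Set Ω) :
    uniformOn Set.univ (f ⁻¹' s) = uniformOn Set.univ s := by
  rw [uniformOn_univ, uniformOn_univ, Measure.count_apply (Set.toFinite _).measurableSet,
    Measure.count_apply (Set.toFinite _).measurableSet, Set.encard_preimage_of_bijective hf]

theorem uniformOn_univ_bool_singleton (b : Bool) :
    uniformOn (Set.univ : Set Bool) {b} = 1 / 2 := by
  rw [uniformOn_univ, Measure.count_singleton, Fintype.card_bool]
  norm_num

/-- There are deferred Nörlund data, a probability space, and `{0,1}`-valued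
random variables `(Y n)` and `Z` with `P(Y n = 1, Z = 0) = P(Y n = 0, Z = 1) = 1/2` and
`P(Y n = 0, Z = 0) = P(Y n = 1, Z = 1) = 0`, such that `(Y n)` is St_DNDC-convergent to `Z`
but not St_DNP-convergent to `Z`. -/
theorem stmt_10 :
    ∃ (x y : ℕ → ℕ) (e g : ℕ → ℝ),
      (∀ m, x m < y m) ∧ Tendsto y atTop atTop ∧
      (∀ m, 0 ≤ e m) ∧ (∀ m, 0 ≤ g m) ∧
      (∀ m, 0 < Rm x y e g m) ∧
      ∃ (Ω : Type) (_ : MeasurableSpace Ω) (μ : Measure Ω) (Y : ℕ → Ω → ℝ) (Z : Ω → ℝ),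
        IsProbabilityMeasure μ ∧ (∀ n, Measurable (Y n)) ∧ Measurable Z ∧
        (∀ n ω, Y n ω = 0 ∨ Y n ω = 1) ∧ (∀ ω, Z ω = 0 ∨ Z ω = 1) ∧
        (∀ n,
          μ {ω | Y n ω = 1 ∧ Z ω = 0} = 1/2 ∧
          μ {ω | Y n ω = 0 ∧ Z ω = 1} = 1/2 ∧
          μ {ω | Y n ω = 0 ∧ Z ω = 0} = 0 ∧
          μ {ω | Y n ω = 1 ∧ Z ω = 1} = 0) ∧
        StDNDC μ x y e g Y Z ∧
        ¬ StDNP μ x y e g Y Z := by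
  -- With `x m = m`, `y m = m + 1` and unit weights, `R_m = 1`; on a fair coin, `Z` and
  -- `Y n = Z ∘ not` have the same law but differ everywhere by `1`.
  have hR : ∀ m, Rm (fun m => m) (fun m => m + 1) (fun _ => 1) (fun _ => 1) m = 1 := by
    simp [Rm]
  let Z : Bool → ℝ := fun ω => ω.toNat
  refine ⟨fun m => m, fun m => m + 1, fun _ => 1, fun _ => 1, Nat.lt_succ_self,
    tendsto_add_atTop_nat 1, fun _ => zero_le_one, fun _ => zero_le_one, by simp [hR],
    Bool, inferInstance, uniformOn Set.univ, fun _ ω => Z (!ω), Z, inferInstance,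
    fun _ => measurable_of_countable _, measurable_of_countable _,
    fun _ ω => by cases ω <;> simp [Z], fun ω => by cases ω <;> simp [Z],
    fun _ => ?_, stDNDC_of_forall_measure_le_eq fun _ t =>
      uniformOn_univ_preimage_of_bijective Bool.involutive_not.bijective {ω | Z ω ≤ t}, ?_⟩
  · have hfalse : {ω | Z (!ω) = 1 ∧ Z ω = 0} = {false} := by ext ω; cases ω <;> simp [Z]
    have htrue : {ω | Z (!ω) = 0 ∧ Z ω = 1} = {true} := by ext ω; cases ω <;> simp [Z]
    have hzero : {ω | Z (!ω) = 0 ∧ Z ω = 0} = ∅ := by ext ω; cases ω <;> simp [Z]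
    have hone : {ω | Z (!ω) = 1 ∧ Z ω = 1} = ∅ := by ext ω; cases ω <;> simp [Z]
    simp only [hfalse, htrue, hzero, hone, uniformOn_univ_bool_singleton, measure_empty, and_self]
  · have hdiff : {ω | (1 : ℝ) ≤ |Z (!ω) - Z ω|} = Set.univ := by ext ω; cases ω <;> simp [Z]
    refine fun h => DNZero.not_of_forall (.of_forall fun m => by simp [hR]) (fun m n => ?_)
      (h 1 one_pos 1 one_pos)
    simp only [hdiff, measure_univ, ENNReal.toReal_one, mul_one, le_refl]
end
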